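/- arXiv:2404.10532 — 2 statements merged into one kernel-verified Lean document; each statement's English description precedes it below -/
import Mathlib

section
/- Let λ̄ = (λ̄_1 > λ̄_2 > … > λ̄_ℓ) be a distinct partition and λ̄λ̄ its doubled distinct partition. Then one has the multiset identity ℋ(λ̄λ̄) = ℋ(λ̄) ⊎ ℋ(λ̄) ⊎ {2λ̄_1,…,2λ̄_ℓ} ∖ {λ̄_1,…,λ̄_ℓ}, where ⊎ denotes multiset union. -/
/-!
Write `μ = λ̄λ̄` and `ℓ = ℓ(λ̄)`, with rows and columns indexed from `0`. For `i < ℓ`, row `i` of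
`μ` has length `λ̄_i + i + 1` and column `i` has length `λ̄_i + i`; column `ℓ` has length `ℓ`, and for
`j ≥ ℓ` column `j + 1` has the length of row `j`. Hence the diagonal hooks are the `2λ̄_i`, the
cells of column `ℓ` above the diagonal have hooks `λ̄_i`, and two hook-preserving bijections match
the remaining cells above the diagonal with those below it: transposition for the cells in
columns `< ℓ`, and `(j, i) ↦ (i, j + 1)` from the cells in rows `≥ ℓ`. So
`ℋ(λ̄) = ℋ_below(μ) ⊎ {λ̄_i}` and `ℋ(μ) = ℋ(λ̄) ⊎ ℋ_below(μ) ⊎ {2λ̄_i}`.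
-/

open scoped Classical

/-- `p k` is the `(k+1)`-st part `λ_{k+1}` of the partition `λ` :
partitions are encoded by their (eventually zero, antitone) sequence of parts. -/
def IsPartition (p : ℕ → ℕ) : Prop :=
  Antitone p ∧ ∃ N, ∀ i, N ≤ i → p i = 0

/-- The number of (nonzero) parts of a partition. -/
noncomputable def plen (p : ℕ → ℕ) : ℕ := Nat.card {i : ℕ // p i ≠ 0}

/-- The number of boxes `|λ|` of a partition. -/
noncomputable def psize (p : ℕ → ℕ) : ℕ := ∑ i ∈ Finset.range (plen p), p i

/-- The conjugate partition : `pconj p j = λ^tr_{j+1}`. -/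
noncomputable def pconj (p : ℕ → ℕ) (j : ℕ) : ℕ := Nat.card {i : ℕ // j + 1 ≤ p i}

/-- The size of the Durfee square of a partition. -/
noncomputable def durfee (p : ℕ → ℕ) : ℕ := Nat.card {i : ℕ // i + 1 ≤ p i}

/-- The cells (boxes) of the Young diagram, `0`-indexed : `(i, j)` is the box in
row `i+1` and column `j+1`. -/
noncomputable def cells (p : ℕ → ℕ) : Finset (ℕ × ℕ) :=
  (Finset.range (plen p) ×ˢ Finset.range (p 0)).filter fun s => s.2 < p s.1

/-- The hook length of the (0-indexed) box `(i, j)` :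
`h = λ_{i+1} - (j+1) + λ^tr_{j+1} - (i+1) + 1`. -/
noncomputable def hookLen (p : ℕ → ℕ) (i j : ℕ) : ℕ :=
  (p i - j) + (pconj p j - i) - 1

/-- The multiset of hook lengths `ℋ(λ)`. -/
noncomputable def hooks (p : ℕ → ℕ) : Multiset ℕ :=
  (cells p).val.map fun s => hookLen p s.1 s.2

/-- The multiset of hook lengths of the boxes strictly above the main diagonal. -/
noncomputable def hooksAbove (p : ℕ → ℕ) : Multiset ℕ :=
  ((cells p).filter fun s => s.1 < s.2).val.map fun s => hookLen p s.1 s.2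

/-- The multiset of hook lengths of the boxes strictly below the main diagonal. -/
noncomputable def hooksBelow (p : ℕ → ℕ) : Multiset ℕ :=
  ((cells p).filter fun s => s.2 < s.1).val.map fun s => hookLen p s.1 s.2

/-- `p` is an `n`-core : no hook length is equal to `n`. -/
def IsCore (n : ℕ) (p : ℕ → ℕ) : Prop := n ∉ hooks p

/-- Self-conjugate partitions. -/
def SelfConj (p : ℕ → ℕ) : Prop := p = pconj p

/-- Distinct partitions (strictly decreasing nonzero parts). -/
def IsDistinct (p : ℕ → ℕ) : Prop := ∀ i, p (i + 1) ≠ 0 → p (i + 1) < p i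

/-- Doubled distinct partitions : `λ_i = λ^tr_i + 1` for `i` at most
the size of the Durfee square. -/
def IsDD (p : ℕ → ℕ) : Prop := ∀ i < durfee p, p i = pconj p i + 1

/-- Conjugates of doubled distinct partitions. -/
def IsDDtr (p : ℕ → ℕ) : Prop := ∃ q, IsPartition q ∧ IsDD q ∧ p = pconj q

/-- The doubled distinct partition `λ̄λ̄` of a distinct partition `λ̄` :
add `λ̄_i` boxes to the `i`-th column of the shifted Young diagram of `λ̄`. -/
noncomputable def double (b : ℕ → ℕ) : ℕ → ℕ := fun i =>
  if i < plen b then b i + (i + 1)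
  else Nat.card {j : ℕ // j < plen b ∧ i + 1 ≤ b j + j}

/-- The self-conjugate partition associated with a distinct partition `λ̄` :
add `λ̄_i - 1` boxes to the `i`-th column of the shifted Young diagram of `λ̄`. -/
noncomputable def scOf (b : ℕ → ℕ) : ℕ → ℕ := fun i =>
  if i < plen b then b i + i
  else Nat.card {j : ℕ // j < plen b ∧ i + 1 ≤ b j + j}

/-- The binary word `ψ(λ) = (c_k)_{k ∈ ℤ}` of a partition :
`c_k = 0` iff `k ∈ {λ_i - i : i ≥ 1}` and `c_k = 1` otherwise
(i.e. iff `k ∈ {j - λ^tr_j - 1 : j ≥ 1}`). -/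
noncomputable def word (p : ℕ → ℕ) (k : ℤ) : ℕ :=
  if ∃ m : ℕ, k = (p m : ℤ) - ((m : ℤ) + 1) then 0 else 1

/-- The `g`-charge of a `g`-core : `m_i = min {k ∈ ℤ : c_{kg+i} = 1}`. -/
noncomputable def ncharge (g : ℕ) (p : ℕ → ℕ) (i : ℕ) : ℤ :=
  sInf {k : ℤ | word p (k * (g : ℤ) + (i : ℤ)) = 1}

/-- The subword of residue `k` modulo `g` of the word of `p`. -/
noncomputable def subword (g k : ℕ) (p : ℕ → ℕ) (i : ℤ) : ℕ :=
  word p ((g : ℤ) * i + (k : ℤ))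

/-- The shift turning the subword of residue `k` into a balanced partition word. -/
noncomputable def qcharge (g : ℕ) (p : ℕ → ℕ) (k : ℕ) : ℤ :=
  (Nat.card {i : ℕ // subword g k p (i : ℤ) = 0} : ℤ) -
    (Nat.card {i : ℕ // subword g k p (-((i : ℤ) + 1)) = 1} : ℤ)

/-- `ν` is the `k`-th component of the `g`-quotient of `p` : its word is the
subword of residue `k` of the word of `p`, reindexed so as to be balanced. -/
def IsQuotientAt (g : ℕ) (p : ℕ → ℕ) (k : ℕ) (ν : ℕ → ℕ) : Prop :=
  ∀ i : ℤ, word ν i = subword g k p (i + qcharge g p k)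

/-- `ω` is the `g`-core of `p` : every subword of its word is sorted
(all `0`'s, then all `1`'s), with transition index the charge of `p`. -/
def IsCoreOf (g : ℕ) (p ω : ℕ → ℕ) : Prop :=
  ∀ k < g, ∀ i : ℤ, (subword g k ω i = 1 ↔ qcharge g p k ≤ i)

/-- `(ω, ν)` is the Littlewood decomposition of `p` for the modulus `g`. -/
def IsLittlewood (g : ℕ) (p ω : ℕ → ℕ) (ν : ℕ → ℕ → ℕ) : Prop :=
  IsCoreOf g p ω ∧ ∀ k < g, IsQuotientAt g p k (ν k)

/-- The number `a_r` of boxes of residue `r` modulo `g`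
(the residue of the box `(i, j)` -- `0`-indexed -- being `(j - i) mod g`). -/
noncomputable def resCount (g : ℕ) (p : ℕ → ℕ) (r : ℕ) : ℕ :=
  ((cells p).filter fun s => ((s.2 : ℤ) - (s.1 : ℤ)) % (g : ℤ) = (r : ℤ)).card

/-- The rectangular partition with `r` rows of length `c`. -/
def rect (r c : ℕ) : ℕ → ℕ := fun i => if i < r then c else 0

/-- The statistic `m = max({1} ∪ {(g + λ̄_i)/g : λ̄_i ≡ 0 (mod g)})`. -/
noncomputable def mStat (g : ℕ) (b : ℕ → ℕ) : ℕ :=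
  sSup ({1} ∪ {k : ℕ | ∃ i < plen b, g ∣ b i ∧ k = (g + b i) / g})

/-- The statistic `m' = max({0} ∪ {λ̄_i/g : λ̄_i ≡ g/2 (mod g)})`. -/
noncomputable def mStat' (g : ℕ) (b : ℕ → ℕ) : ℕ :=
  sSup ({0} ∪ {k : ℕ | ∃ i < plen b, 2 * (b i % g) = g ∧ k = b i / g})

theorem Nat.card_subtype_of_forall_iff_lt {P : ℕ → Prop} {k : ℕ} (h : ∀ i, P i ↔ i < k) :
    Nat.card {i // P i} = k :=
  (Nat.card_congr ((Equiv.subtypeEquivRight h).trans Fin.equivSubtype.symm)).trans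
    (Nat.card_eq_fintype_card.trans (Fintype.card_fin k))

theorem Nat.lt_card_subtype_iff {P : ℕ → Prop} (hP : Antitone P) (hN : ∃ N, ¬ P N) (i : ℕ) :
    i < Nat.card {i // P i} ↔ P i := by
  classical
  have hfind : ∀ i, P i ↔ i < Nat.find hN := fun i =>
    ⟨fun h => lt_of_not_ge fun hle => Nat.find_spec hN (hP hle h),
      fun h => not_not.1 (Nat.find_min hN h)⟩
  rw [Nat.card_subtype_of_forall_iff_lt hfind, hfind]

namespace IsPartition

variable {p : ℕ → ℕ} (hp : IsPartition p)
include hp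

theorem lt_plen_iff (i : ℕ) : i < plen p ↔ p i ≠ 0 := by
  obtain ⟨N, hN⟩ := hp.2
  exact Nat.lt_card_subtype_iff (fun i j hij h => by have := hp.1 hij; omega)
    ⟨N, fun h => h (hN N le_rfl)⟩ i

theorem lt_pconj_iff (i j : ℕ) : i < pconj p j ↔ j < p i := by
  obtain ⟨N, hN⟩ := hp.2
  exact Nat.lt_card_subtype_iff (fun i i' hii' h => le_trans h (hp.1 hii'))
    ⟨N, by simp [hN N le_rfl]⟩ i

theorem mem_cells_iff (s : ℕ × ℕ) : s ∈ cells p ↔ s.2 < p s.1 := by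
  simp only [cells, Finset.mem_filter, Finset.mem_product, Finset.mem_range, hp.lt_plen_iff]
  exact ⟨And.right, fun h => ⟨⟨by omega, lt_of_lt_of_le h (hp.1 (Nat.zero_le _))⟩, h⟩⟩

end IsPartition

noncomputable def hooksOn (p : ℕ → ℕ) (P : ℕ × ℕ → Prop) [DecidablePred P] : Multiset ℕ :=
  ((cells p).filter P).val.map fun s => hookLen p s.1 s.2

section HooksOn

variable {p : ℕ → ℕ} {P Q : ℕ × ℕ → Prop} [DecidablePred P] [DecidablePred Q]

theorem hooksOn_eq_add {R : ℕ × ℕ → Prop} [DecidablePred R] (h : ∀ s, P s ↔ Q s ∨ R s)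
    (hQR : ∀ s, Q s → ¬ R s) : hooksOn p P = hooksOn p Q + hooksOn p R := by
  simp only [hooksOn, Finset.filter_val, ← Multiset.map_add]
  rw [Multiset.filter_add_filter,
    (Multiset.filter_eq_nil (p := fun s => Q s ∧ R s)).2 fun s _ hs => hQR s hs.1 hs.2,
    add_zero, Multiset.filter_congr fun s _ => h s]

theorem hooksOn_eq_of_bijOn (e : ℕ × ℕ → ℕ × ℕ)
    (he : ∀ s ∈ cells p, P s → e s ∈ cells p ∧ Q (e s)) (he_inj : Function.Injective e)
    (he_surj : ∀ t ∈ cells p, Q t → ∃ s ∈ cells p, P s ∧ e s = t)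
    (he_hook : ∀ s ∈ cells p, P s → hookLen p (e s).1 (e s).2 = hookLen p s.1 s.2) :
    hooksOn p P = hooksOn p Q := by
  refine Multiset.map_eq_map_of_bij_of_nodup _ _ (Finset.nodup _) (Finset.nodup _)
    (fun s _ => e s) (fun s hs => ?_) (fun _ _ _ _ h => he_inj h) (fun t ht => ?_)
    (fun s hs => ?_)
  · rw [Finset.mem_val, Finset.mem_filter] at hs ⊢
    exact he s hs.1 hs.2
  · rw [Finset.mem_val, Finset.mem_filter] at ht
    obtain ⟨s, hs, hPs, rfl⟩ := he_surj t ht.1 ht.2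
    exact ⟨s, Finset.mem_val.mpr (Finset.mem_filter.mpr ⟨hs, hPs⟩), rfl⟩
  · rw [Finset.mem_val, Finset.mem_filter] at hs
    exact (he_hook s hs.1 hs.2).symm

theorem hooksOn_eq_map_range (n : ℕ) (e : ℕ → ℕ × ℕ) (f : ℕ → ℕ)
    (he : ∀ i < n, e i ∈ cells p ∧ P (e i)) (he_inj : Function.Injective e)
    (he_surj : ∀ t ∈ cells p, P t → ∃ i < n, e i = t)
    (he_hook : ∀ i < n, hookLen p (e i).1 (e i).2 = f i) :
    hooksOn p P = (Finset.range n).val.map f := by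
  refine (Multiset.map_eq_map_of_bij_of_nodup _ _ (Finset.nodup _) (Finset.nodup _)
    (fun i _ => e i) (fun i hi => ?_) (fun _ _ _ _ h => he_inj h) (fun t ht => ?_)
    (fun i hi => ?_)).symm
  · rw [Finset.mem_val, Finset.mem_range] at hi
    exact Finset.mem_val.mpr (Finset.mem_filter.mpr (he i hi))
  · rw [Finset.mem_val, Finset.mem_filter] at ht
    obtain ⟨i, hi, rfl⟩ := he_surj t ht.1 ht.2
    exact ⟨i, Finset.mem_val.mpr (Finset.mem_range.mpr hi), rfl⟩
  · rw [Finset.mem_val, Finset.mem_range] at hi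
    exact (he_hook i hi).symm

theorem hooks_eq_hooksAbove_add_hooksBelow_add_diag :
    hooks p = hooksAbove p + hooksBelow p + hooksOn p (fun s => s.1 = s.2) := by
  have hall : hooks p = hooksOn p (fun _ => True) := by
    rw [hooksOn, Finset.filter_true]; rfl
  rw [hall, add_assoc, hooksOn_eq_add (Q := fun s => s.1 < s.2) (R := fun s => ¬ s.1 < s.2)
    (by simp only [true_iff]; omega) (by omega)]
  congr 1
  exact hooksOn_eq_add (by omega) (by omega)

end HooksOn

section DoubledDistinct

variable {b : ℕ → ℕ}

theorem double_of_lt_plen {i : ℕ} (hi : i < plen b) : double b i = b i + i + 1 := by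
  rw [double, if_pos hi, add_assoc]

variable (hb : IsPartition b) (hd : IsDistinct b)
include hb hd

theorem antitoneOn_add_self : AntitoneOn (fun i => b i + i) (Set.Iio (plen b)) := by
  intro i _ j hj hij
  induction j, hij using Nat.le_induction with
  | base => exact le_rfl
  | succ j hij ih =>
    have hj' : j + 1 < plen b := hj
    have hlt := hd j ((hb.lt_plen_iff _).1 hj')
    have := ih (show j < plen b by omega)
    dsimp only at this ⊢
    omega

theorem plen_le_add_self {i : ℕ} (hi : i < plen b) : plen b ≤ b i + i := by
  have hlast : b (plen b - 1) ≠ 0 := (hb.lt_plen_iff _).1 (by omega)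
  have := antitoneOn_add_self hb hd hi (show plen b - 1 < plen b by omega) (by omega)
  dsimp only at this
  omega

theorem lt_double_iff (i j : ℕ) :
    j < double b i ↔ (i < plen b ∧ j ≤ b i + i) ∨ (plen b ≤ i ∧ j < plen b ∧ i < b j + j) := by
  rcases lt_or_ge i (plen b) with hi | hi
  · rw [double_of_lt_plen hi]
    omega
  · have hdown : Antitone fun j => j < plen b ∧ i + 1 ≤ b j + j := fun j j' hjj' h =>
      ⟨by omega, h.2.trans (antitoneOn_add_self hb hd (by omega : j < plen b) h.1 hjj')⟩
    rw [double, if_neg (by omega), Nat.lt_card_subtype_iff hdown ⟨plen b, by simp⟩]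
    omega

theorem isPartition_double : IsPartition (double b) := by
  refine ⟨fun i i' hii' => le_of_forall_lt fun j hj => ?_, plen b + b 0, fun i hi => ?_⟩
  · rw [lt_double_iff hb hd] at hj ⊢
    rcases hj with ⟨hi', hj⟩ | ⟨hi', hj, hji'⟩
    · exact Or.inl ⟨by omega, hj.trans (antitoneOn_add_self hb hd (by omega : i < plen b) hi' hii')⟩
    · rcases lt_or_ge i (plen b) with hi | hi
      · have := plen_le_add_self hb hd hi
        omega
      · omega
  · by_contra hne
    have := (lt_double_iff hb hd i 0).1 (Nat.pos_of_ne_zero hne)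
    omega

theorem pconj_double_of_lt_plen {j : ℕ} (hj : j < plen b) : pconj (double b) j = b j + j := by
  refine eq_of_forall_lt_iff fun i => ?_
  rw [(isPartition_double hb hd).lt_pconj_iff, lt_double_iff hb hd]
  have := plen_le_add_self hb hd hj
  rcases lt_or_ge i (plen b) with hi | hi
  · have := plen_le_add_self hb hd hi
    omega
  · omega

theorem pconj_double_plen : pconj (double b) (plen b) = plen b := by
  refine eq_of_forall_lt_iff fun i => ?_
  rw [(isPartition_double hb hd).lt_pconj_iff, lt_double_iff hb hd]
  rcases lt_or_ge i (plen b) with hi | hi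
  · have := plen_le_add_self hb hd hi
    omega
  · omega

theorem pconj_double_succ {j : ℕ} (hj : plen b ≤ j) : pconj (double b) (j + 1) = double b j := by
  refine eq_of_forall_lt_iff fun i => ?_
  rw [(isPartition_double hb hd).lt_pconj_iff, lt_double_iff hb hd, lt_double_iff hb hd]
  omega

theorem hookLen_double_diag {i : ℕ} (hi : i < plen b) : hookLen (double b) i i = 2 * b i := by
  rw [hookLen, double_of_lt_plen hi, pconj_double_of_lt_plen hb hd hi]
  omega

theorem hookLen_double_plen {i : ℕ} (hi : i < plen b) : hookLen (double b) i (plen b) = b i := by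
  rw [hookLen, double_of_lt_plen hi, pconj_double_plen hb hd]
  have := plen_le_add_self hb hd hi
  omega

theorem hookLen_double_swap {i j : ℕ} (hij : i < j) (hj : j < plen b) :
    hookLen (double b) j i = hookLen (double b) i j := by
  have hi : i < plen b := hij.trans hj
  rw [hookLen, hookLen, double_of_lt_plen hi, double_of_lt_plen hj,
    pconj_double_of_lt_plen hb hd hi, pconj_double_of_lt_plen hb hd hj]
  have := plen_le_add_self hb hd hi
  have := plen_le_add_self hb hd hj
  omega

theorem hookLen_double_succ {i j : ℕ} (hj : plen b ≤ j) (hij : i < double b j) :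
    hookLen (double b) i (j + 1) = hookLen (double b) j i := by
  have hi : i < plen b ∧ j < b i + i := by
    have := (lt_double_iff hb hd j i).1 hij
    omega
  rw [hookLen, hookLen, double_of_lt_plen hi.1, pconj_double_succ hb hd hj,
    pconj_double_of_lt_plen hb hd hi.1]
  omega

theorem mem_cells_double_iff (s : ℕ × ℕ) : s ∈ cells (double b) ↔
    (s.1 < plen b ∧ s.2 ≤ b s.1 + s.1) ∨ (plen b ≤ s.1 ∧ s.2 < plen b ∧ s.1 < b s.2 + s.2) := by
  rw [(isPartition_double hb hd).mem_cells_iff, lt_double_iff hb hd]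

theorem hooksOn_double_diag :
    hooksOn (double b) (fun s => s.1 = s.2) = (Finset.range (plen b)).val.map (2 * b ·) := by
  refine hooksOn_eq_map_range _ (fun i => (i, i)) _ (fun i hi => ⟨?_, rfl⟩)
    (fun i j h => congrArg Prod.fst h) (fun s hs hdiag => ⟨s.1, ?_, Prod.ext rfl hdiag⟩)
    (fun i hi => hookLen_double_diag hb hd hi)
  · rw [mem_cells_double_iff hb hd]
    omega
  · rw [mem_cells_double_iff hb hd] at hs
    omega

theorem hooksOn_double_column_plen :
    hooksOn (double b) (fun s => s.1 < s.2 ∧ s.2 = plen b) = (Finset.range (plen b)).val.map b := by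
  refine hooksOn_eq_map_range _ (fun i => (i, plen b)) _ (fun i hi => ⟨?_, hi, rfl⟩)
    (fun i j h => congrArg Prod.fst h)
    (fun s _ hs => ⟨s.1, hs.1.trans_eq hs.2, Prod.ext rfl hs.2.symm⟩)
    (fun i hi => hookLen_double_plen hb hd hi)
  rw [mem_cells_double_iff hb hd]
  have := plen_le_add_self hb hd hi
  dsimp only
  omega

theorem hooksOn_double_transpose :
    hooksOn (double b) (fun s => s.2 < s.1 ∧ s.1 < plen b) =
      hooksOn (double b) (fun s => s.1 < s.2 ∧ s.2 < plen b) := by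
  refine hooksOn_eq_of_bijOn Prod.swap (fun s hs hP => ⟨?_, hP⟩) Prod.swap_injective
    (fun t ht hQ => ⟨t.swap, ?_, hQ, t.swap_swap⟩)
    (fun s _ hP => (hookLen_double_swap hb hd hP.1 hP.2).symm)
  · rw [mem_cells_double_iff hb hd] at hs ⊢
    have := plen_le_add_self hb hd (hP.1.trans hP.2)
    simp only [Prod.fst_swap, Prod.snd_swap]
    omega
  · rw [mem_cells_double_iff hb hd] at ht ⊢
    have := plen_le_add_self hb hd (hQ.1.trans hQ.2)
    simp only [Prod.fst_swap, Prod.snd_swap]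
    omega

theorem hooksOn_double_shift :
    hooksOn (double b) (fun s => s.2 < s.1 ∧ plen b ≤ s.1) =
      hooksOn (double b) (fun s => s.1 < s.2 ∧ plen b < s.2) := by
  refine hooksOn_eq_of_bijOn (fun s => (s.2, s.1 + 1)) (fun s hs hP => ⟨?_, ?_⟩)
    (fun s t h => Prod.ext (by simpa using congrArg Prod.snd h) (congrArg Prod.fst h))
    (fun t ht hQ => ⟨(t.2 - 1, t.1), ?_, ?_, ?_⟩) (fun s hs hP => ?_)
  · rw [mem_cells_double_iff hb hd] at hs ⊢
    dsimp only
    omega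
  · dsimp only
    omega
  · rw [mem_cells_double_iff hb hd] at ht ⊢
    dsimp only
    omega
  · rw [mem_cells_double_iff hb hd] at ht
    dsimp only
    omega
  · exact Prod.ext rfl (by dsimp only; omega)
  · exact hookLen_double_succ hb hd hP.2 (((isPartition_double hb hd).mem_cells_iff s).1 hs)

theorem hooksAbove_double :
    hooksAbove (double b) = hooksBelow (double b) + (Finset.range (plen b)).val.map b := by
  have habove : hooksAbove (double b) = hooksOn (double b) (fun s => s.1 < s.2 ∧ s.2 < plen b) +
      (hooksOn (double b) (fun s => s.1 < s.2 ∧ s.2 = plen b) +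
        hooksOn (double b) (fun s => s.1 < s.2 ∧ plen b < s.2)) := by
    rw [← hooksOn_eq_add (P := fun s => s.1 < s.2 ∧ plen b ≤ s.2) (by omega) (by omega)]
    exact hooksOn_eq_add (by omega) (by omega)
  have hbelow : hooksBelow (double b) = hooksOn (double b) (fun s => s.2 < s.1 ∧ s.1 < plen b) +
      hooksOn (double b) (fun s => s.2 < s.1 ∧ plen b ≤ s.1) :=
    hooksOn_eq_add (by omega) (by omega)
  rw [habove, hbelow, hooksOn_double_transpose hb hd, hooksOn_double_column_plen hb hd,
    hooksOn_double_shift hb hd]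
  abel

end DoubledDistinct

/-- For a distinct partition `λ̄`, the multiset identity
`ℋ(λ̄λ̄) = ℋ(λ̄) ⊎ ℋ(λ̄) ⊎ {2λ̄_1, …, 2λ̄_ℓ} ∖ {λ̄_1, …, λ̄_ℓ}`,
where `ℋ(λ̄)` is the multiset of shifted hook lengths of `λ̄`, i.e. the multiset
of hook lengths of `λ̄λ̄` of the boxes lying strictly above the main diagonal. -/
theorem doubled_distinct_hooks (b : ℕ → ℕ) (hb : IsPartition b) (hd : IsDistinct b) :
    hooks (double b) =
      hooksAbove (double b) + hooksAbove (double b)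
        + ((Finset.range (plen b)).val.map fun i => 2 * b i)
        - ((Finset.range (plen b)).val.map fun i => b i) := by
  rw [hooks_eq_hooksAbove_add_hooksBelow_add_diag, hooksOn_double_diag hb hd,
    hooksAbove_double hb hd]
  exact eq_tsub_of_add_eq (by abel)
end

section
/- Let λ̄ = (λ̄_1 > … > λ̄_ℓ) be a distinct partition. Let (c_k)_{k∈ℤ} = ψ(λ̄λ̄) be the binary word of its doubled distinct partition, (c^tr_k)_{k∈ℤ} = ψ((λ̄λ̄)^tr) that of the conjugate, and (c^s_k)_{k∈ℤ} = ψ(μ) that of the self-conjugate partition μ associated to λ̄. Then: {k ∈ ℕ : c_k = 0} = {λ̄_1,…,λ̄_ℓ}, {k ∈ ℕ : c^tr_k = 0} = {λ̄_1 − 1,…,λ̄_ℓ − 1}, and {k ∈ ℕ : c^s_k = 0} = {λ̄_1 − 1,…,λ̄_ℓ − 1}. -/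
open scoped Classical

/-! A letter `0` of nonnegative index in the word of a partition sits at `λᵢ - i ≥ 0`, the arm
length of a diagonal box. The first `ℓ` rows of `λ̄λ̄` and of `μ` have lengths `λ̄ᵢ + i` and
`λ̄ᵢ + i - 1`, hence arms `λ̄ᵢ` and `λ̄ᵢ - 1`; their later rows are columns of the shifted diagram
of `λ̄`, of length at most `ℓ`, so they miss the diagonal. Counting the rows of `λ̄λ̄` that reach
column `i ≤ ℓ` gives `(λ̄λ̄)^tr_i = λ̄ᵢ + i - 1`, so `(λ̄λ̄)^tr` has arms `λ̄ᵢ - 1` too. -/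

theorem lt_natCard_iff_of_isLowerSet {S : Set ℕ} (hS : IsLowerSet S) (hfin : S.Finite) (k : ℕ) :
    k < Nat.card S ↔ k ∈ S := by
  obtain h | ⟨a, rfl⟩ := hS.eq_univ_or_Iio
  · exact absurd (h ▸ hfin) Set.infinite_univ
  · rw [Nat.card_coe_set_eq, Set.ncard_Iio_nat, Set.mem_Iio]

theorem natCard_le_of_subset_Iio {S : Set ℕ} {n : ℕ} (h : S ⊆ Set.Iio n) : Nat.card S ≤ n := by
  rw [Nat.card_coe_set_eq, ← Set.ncard_Iio_nat n]
  exact Set.ncard_le_ncard h (Set.finite_Iio n)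

theorem word_eq_zero_iff (p : ℕ → ℕ) (k : ℤ) :
    word p k = 0 ↔ ∃ m : ℕ, k = (p m : ℤ) - ((m : ℤ) + 1) := by
  unfold word
  split_ifs with h <;> simp [h]

theorem setOf_word_natCast_eq_zero {p a : ℕ → ℕ} {L : ℕ} (harm : ∀ i < L, p i = a i + (i + 1))
    (hbelow : ∀ m, L ≤ m → p m ≤ m) :
    {k : ℕ | word p k = 0} = {k : ℕ | ∃ i < L, a i = k} := by
  ext k
  simp only [Set.mem_ofPred_eq, word_eq_zero_iff]
  constructor
  · rintro ⟨m, hm⟩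
    by_cases hmL : m < L
    · rw [harm m hmL] at hm
      exact ⟨m, hmL, by push_cast at hm; omega⟩
    · have := hbelow m (not_lt.mp hmL)
      omega
  · rintro ⟨i, hi, rfl⟩
    exact ⟨i, by rw [harm i hi]; push_cast; ring⟩

theorem IsPartition.lt_plen_iff_s6 {p : ℕ → ℕ} (hp : IsPartition p) (i : ℕ) :
    i < plen p ↔ p i ≠ 0 := by
  obtain ⟨hmono, N, hN⟩ := hp
  refine lt_natCard_iff_of_isLowerSet (S := {i | p i ≠ 0}) (fun i j hji hi h0 => ?_) ?_ i
  · exact hi (Nat.eq_zero_of_le_zero (h0 ▸ hmono hji))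
  · exact (Set.finite_Iio N).subset fun i hi => not_le.mp fun h => hi (hN i h)

variable {b : ℕ → ℕ}

theorem IsDistinct.add_le_add (hb : IsPartition b) (hd : IsDistinct b) {i j : ℕ} (hij : i ≤ j)
    (hj : j < plen b) : b j + j ≤ b i + i := by
  induction j, hij using Nat.le_induction with
  | base => exact le_rfl
  | succ n _ ih =>
    have := hd n ((hb.lt_plen_iff_s6 _).mp hj)
    have := ih (by omega)
    omega

theorem IsDistinct.plen_le_add (hb : IsPartition b) (hd : IsDistinct b) {i : ℕ}
    (hi : i < plen b) : plen b ≤ b i + i := by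
  have := hd.add_le_add hb (show i ≤ plen b - 1 by omega) (by omega)
  have := (hb.lt_plen_iff_s6 (plen b - 1)).mp (by omega)
  omega

noncomputable def shiftedCol (b : ℕ → ℕ) (m : ℕ) : ℕ :=
  Nat.card {j : ℕ // j < plen b ∧ m + 1 ≤ b j + j}

theorem shiftedCol_le_plen (b : ℕ → ℕ) (m : ℕ) : shiftedCol b m ≤ plen b :=
  natCard_le_of_subset_Iio (S := {j | j < plen b ∧ m + 1 ≤ b j + j}) fun _ hj => hj.1

theorem lt_shiftedCol_iff (hb : IsPartition b) (hd : IsDistinct b) (m j : ℕ) :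
    j < shiftedCol b m ↔ j < plen b ∧ m + 1 ≤ b j + j :=
  lt_natCard_iff_of_isLowerSet (S := {j | j < plen b ∧ m + 1 ≤ b j + j})
    (fun _ _ hji hj => ⟨hji.trans_lt hj.1, hj.2.trans (hd.add_le_add hb hji hj.1)⟩)
    ((Set.finite_Iio (plen b)).subset fun _ hj => hj.1) j

theorem double_of_lt {i : ℕ} (h : i < plen b) : double b i = b i + (i + 1) :=
  if_pos h

theorem double_of_le {i : ℕ} (h : plen b ≤ i) : double b i = shiftedCol b i :=
  if_neg (not_lt.mpr h)

theorem scOf_of_lt {i : ℕ} (h : i < plen b) : scOf b i = b i + i :=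
  if_pos h

theorem scOf_of_le {i : ℕ} (h : plen b ≤ i) : scOf b i = shiftedCol b i :=
  if_neg (not_lt.mpr h)

theorem pconj_double_of_lt (hb : IsPartition b) (hd : IsDistinct b) {i : ℕ} (hi : i < plen b) :
    pconj (double b) i = b i + i := by
  have hrows : {r | i + 1 ≤ double b r} = Set.Iio (b i + i) := by
    ext r
    simp only [Set.mem_ofPred_eq, Set.mem_Iio]
    rcases lt_or_ge r (plen b) with hr | hr
    · have := hd.plen_le_add hb hr
      have := hd.plen_le_add hb hi
      rw [double_of_lt hr]
      omega
    · rw [double_of_le hr, Nat.add_one_le_iff, lt_shiftedCol_iff hb hd]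
      omega
  show Nat.card {r | i + 1 ≤ double b r} = _
  rw [hrows, Nat.card_coe_set_eq, Set.ncard_Iio_nat]

theorem pconj_double_le_self {m : ℕ} (hm : plen b ≤ m) : pconj (double b) m ≤ m := by
  refine (natCard_le_of_subset_Iio (S := {r | m + 1 ≤ double b r}) fun r hr => ?_).trans hm
  by_contra h
  rw [Set.mem_ofPred_eq, double_of_le (not_lt.mp h)] at hr
  have := shiftedCol_le_plen b r
  omega

/-- For a distinct partition `λ̄ = (λ̄_1 > … > λ̄_ℓ)`, the nonnegative indices of
the letters `0` in the word of the doubled distinct partition `λ̄λ̄` are exactly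
the parts `λ̄_i`; those in the word of `(λ̄λ̄)^tr` and in the word of the
self-conjugate partition `μ` associated with `λ̄` are exactly the `λ̄_i - 1`. -/
theorem zero_indices_of_doubled_words (b : ℕ → ℕ) (hb : IsPartition b) (hd : IsDistinct b) :
    {k : ℕ | word (double b) (k : ℤ) = 0} = {m : ℕ | ∃ i < plen b, b i = m} ∧
    {k : ℕ | word (pconj (double b)) (k : ℤ) = 0} = {m : ℕ | ∃ i < plen b, b i - 1 = m} ∧
    {k : ℕ | word (scOf b) (k : ℤ) = 0} = {m : ℕ | ∃ i < plen b, b i - 1 = m} := by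
  have hpos : ∀ i < plen b, b i ≠ 0 := fun i => (hb.lt_plen_iff_s6 i).mp
  have hcol : ∀ m, plen b ≤ m → shiftedCol b m ≤ m := fun m hm => (shiftedCol_le_plen b m).trans hm
  refine ⟨setOf_word_natCast_eq_zero (fun i hi => double_of_lt hi)
      fun m hm => (double_of_le hm).trans_le (hcol m hm),
    setOf_word_natCast_eq_zero (fun i hi => ?_) fun m hm => pconj_double_le_self hm,
    setOf_word_natCast_eq_zero (fun i hi => ?_) fun m hm => (scOf_of_le hm).trans_le (hcol m hm)⟩
  · rw [pconj_double_of_lt hb hd hi]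
    have := hpos i hi
    omega
  · rw [scOf_of_lt hi]
    have := hpos i hi
    omega
end
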